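/- arXiv:math/0308045 — 6 statements merged into one kernel-verified Lean document; each statement's English description precedes it below -/
import Mathlib

section
/- A ≥-hereditary graph property P is primitive if and only if P = +G for some graph G. -/
attribute [local instance] Classical.propDecidable

open SimpleGraph

/-- A finite simple graph, bundled. -/
structure FGraph : Type 1 where
  V : Type
  [fin : Fintype V]
  graph : SimpleGraph V

attribute [instance] FGraph.fin

namespace FGraph

/-- `G.IsInduced H` : `G` is isomorphic to an induced subgraph of `H`. -/
def IsInduced (G H : FGraph) : Prop := Nonempty (G.graph ↪g H.graph)

/-- `G.IsSub H` : `G` is isomorphic to a subgraph of `H`. -/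
def IsSub (G H : FGraph) : Prop := ∃ f : G.graph →g H.graph, Function.Injective f

/-- `G.Iso H` : `G` and `H` are isomorphic. -/
def Iso (G H : FGraph) : Prop := Nonempty (G.graph ≃g H.graph)

/-- The induced subgraph of `G` on a set `s` of vertices. -/
noncomputable def induce (G : FGraph) (s : Set G.V) : FGraph := ⟨↥s, G.graph.induce s⟩

end FGraph

/-- A class of finite graphs. -/
abbrev GProp : Type 1 := FGraph → Prop

/-- A graph property: a nonempty isomorphism-closed class of finite graphs,
each having at least one vertex. -/
structure IsGProp (P : GProp) : Prop where
  nonempty : ∃ G, P G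
  vertexNonempty : ∀ G, P G → Nonempty G.V
  isoClosed : ∀ G H, G.Iso H → P G → P H

namespace GProp

/-- The product `P ∘ Q` of two classes of graphs. -/
def prod (P Q : GProp) : GProp := fun G =>
  Nonempty G.V ∧ ∃ s : Set G.V,
    (s.Nonempty → P (G.induce s)) ∧ ((sᶜ : Set G.V).Nonempty → Q (G.induce (sᶜ : Set G.V)))

/-- The product `∏ i, Ps i` of an indexed family of classes of graphs:
the vertex set is partitioned into the (possibly empty) preimages of a map
to the index set, and every nonempty part must induce a graph in the
corresponding class. -/
def iProd {I : Type*} (Ps : I → GProp) : GProp := fun G =>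
  Nonempty G.V ∧ ∃ f : G.V → I,
    ∀ i, (f ⁻¹' {i}).Nonempty → Ps i (G.induce (f ⁻¹' {i}))

end GProp

/-- Closed under induced subgraphs with at least one vertex. -/
def IndHereditary (P : GProp) : Prop :=
  ∀ G H : FGraph, P G → H.IsInduced G → Nonempty H.V → P H

/-- Closed under subgraphs with at least one vertex. -/
def Hereditary (P : GProp) : Prop :=
  ∀ G H : FGraph, P G → H.IsSub G → Nonempty H.V → P H

/-- Closed under induced supergraphs. -/
def GeqHereditary (P : GProp) : Prop :=
  ∀ G H : FGraph, P H → H.IsInduced G → P G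


/-- The property `+G`: all graphs containing `G` as an induced subgraph. -/
def plusG (G : FGraph) : GProp := fun H => G.IsInduced H

/-- A `≥`-hereditary property `P` is primitive if in every factorisation of `P`
into `≥`-hereditary graph properties, one of the factors equals `P`. -/
def Primitive (P : GProp) : Prop :=
  ∀ (I : Type 1) (Ps : I → GProp), (∀ i, IsGProp (Ps i)) → (∀ i, GeqHereditary (Ps i)) →
    P = GProp.iProd Ps → ∃ i, Ps i = P

lemma FGraph.induce_isInduced (G : FGraph) (s : Set G.V) : (G.induce s).IsInduced G :=
  ⟨SimpleGraph.Embedding.induce s⟩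

/-- For ≥-hereditary isomorphism-closed properties, the product is the union. -/
lemma iProd_eq_union {I : Type*} (Ps : I → GProp) (hp : ∀ i, IsGProp (Ps i))
    (hg : ∀ i, GeqHereditary (Ps i)) (G : FGraph) :
    GProp.iProd Ps G ↔ ∃ i, Ps i G := by
  constructor
  · rintro ⟨⟨v⟩, f, hf⟩
    exact ⟨f v, hg (f v) G (G.induce _) (hf (f v) ⟨v, rfl⟩) (G.induce_isInduced _)⟩
  · rintro ⟨i, hi⟩
    refine ⟨(hp i).vertexNonempty G hi, fun _ => i, fun j hj => ?_⟩
    obtain ⟨x, hx⟩ := hj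
    obtain rfl : i = j := hx
    have hset : ((fun _ : G.V => i) ⁻¹' {i}) = Set.univ := by
      ext y; simp
    rw [hset]
    exact (hp i).isoClosed G (G.induce Set.univ)
      ⟨(SimpleGraph.induceUnivIso G.graph).symm⟩ hi

lemma plusG_isGProp (G : FGraph) (h : Nonempty G.V) : IsGProp (plusG G) where
  nonempty := ⟨G, ⟨SimpleGraph.Embedding.refl⟩⟩
  vertexNonempty := fun _ he => he.elim fun e => h.elim fun v => ⟨e v⟩
  isoClosed := fun _ _ hiso he =>
    hiso.elim fun iso => he.elim fun e => ⟨iso.toEmbedding.comp e⟩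

lemma plusG_geq (G : FGraph) : GeqHereditary (plusG G) := by
  intro A B hB hind
  obtain ⟨e⟩ := hind
  obtain ⟨e'⟩ := hB
  exact ⟨e.comp e'⟩

/-- a `≥`-hereditary graph property `P` is primitive iff `P = +G`
for some graph `G`. -/
theorem statement_1 (P : GProp) (hP : IsGProp P) (hgeq : GeqHereditary P) :
    Primitive P ↔ ∃ G : FGraph, Nonempty G.V ∧ P = plusG G := by
  constructor
  · intro hprim
    have hp : ∀ H : {H : FGraph // P H}, IsGProp (plusG H.1) :=
      fun H => plusG_isGProp H.1 (hP.vertexNonempty H.1 H.2)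
    have hg : ∀ H : {H : FGraph // P H}, GeqHereditary (plusG H.1) :=
      fun H => plusG_geq H.1
    have heq : P = GProp.iProd (fun H : {H : FGraph // P H} => plusG H.1) := by
      funext G
      apply propext
      rw [iProd_eq_union _ hp hg]
      constructor
      · intro hG
        exact ⟨⟨G, hG⟩, ⟨SimpleGraph.Embedding.refl⟩⟩
      · rintro ⟨H, hind⟩
        exact hgeq G H.1 H.2 hind
    obtain ⟨i, hi⟩ := hprim {H : FGraph // P H} (fun H => plusG H.1) hp hg heq
    exact ⟨i.1, hP.vertexNonempty i.1 i.2, hi.symm⟩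
  · rintro ⟨G, hGne, rfl⟩
    intro I Ps hps hgs heq
    have hG : GProp.iProd Ps G := by
      rw [← heq]; exact ⟨SimpleGraph.Embedding.refl⟩
    obtain ⟨i, hi⟩ := (iProd_eq_union Ps hps hgs G).1 hG
    refine ⟨i, ?_⟩
    funext H
    apply propext
    constructor
    · intro hH
      have : GProp.iProd Ps H := (iProd_eq_union Ps hps hgs H).2 ⟨i, hH⟩
      rw [← heq] at this
      exact this
    · intro hind
      exact hgs i H G hi hind
end

section
/- Let r,s with 1 ≤ r,s ≤ ∞, and suppose O(r)∘O(s) = Q₁∘Q₂ for graph properties Q₁ and Q₂. Then, as an unordered pair, {Q₁,Q₂} = {O(r),O(s)}. -/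
attribute [local instance] Classical.propDecidable

open SimpleGraph

/-- `O(r)`: edgeless graphs on at least one and at most `r` vertices
(`r = ⊤` means all finite edgeless graphs). -/
def Oprop (r : ℕ∞) : GProp := fun G =>
  Nonempty G.V ∧ G.graph = ⊥ ∧ (Fintype.card G.V : ℕ∞) ≤ r

/-!
Every graph of `Q₁` is edgeless: an edge `uv` of `G ∈ Q₁`, together with a vertex of some
`H ∈ Q₂`, spans a triangle in the join `G + H ∈ Q₁ ∘ Q₂ = O(r) ∘ O(s)`, whose graphs split into two
independent sets. Likewise for `Q₂`. When both factors consist of edgeless graphs, the only such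
splits of `K_{p,q} = K̄_p + K̄_q` are its two sides, so `K_{p,q} ∈ Q₁ ∘ Q₂` iff `K̄_p ∈ Q₁` and
`K̄_q ∈ Q₂` or the other way round. Comparing with `O(r) ∘ O(s)` for `r ≤ s`: both factors
contain `K̄_n` for `n ≤ r` (take `p = q = n`), `K̄_n` lies in `Q₁` or `Q₂` iff `n ≤ s`
(take `q = 1`), and if `Q₁` contains some `K̄_m` with `m > r`, then `Q₂` contains no `K̄_n` with
`n > r` (take `K_{m,n}`). Finally, an isomorphism-closed class of edgeless graphs is determined
by the `K̄_n` it contains.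
-/

theorem SimpleGraph.mem_iff_notMem_of_adj {V : Type*} {G : SimpleGraph V} {S : Set V}
    (hS : G.IsIndepSet S) (hSc : G.IsIndepSet Sᶜ) {a b : V} (hab : G.Adj a b) :
    a ∈ S ↔ b ∉ S :=
  ⟨fun ha hb => hS ha hb hab.ne hab, fun hb => by_contra fun ha => hSc ha hb hab.ne hab⟩

namespace FGraph

def edgeless (n : ℕ) : FGraph := ⟨Fin n, ⊥⟩

theorem card_edgeless (n : ℕ) : Fintype.card (edgeless n).V = n :=
  Fintype.card_fin n

abbrev join (G H : FGraph) : FGraph where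
  V := G.V ⊕ H.V
  graph :=
    { Adj
        | .inl a, .inl b => G.graph.Adj a b
        | .inr a, .inr b => H.graph.Adj a b
        | _, _ => True
      symm := ⟨by rintro (a | a) (b | b) h <;> first | trivial | exact h.symm⟩
      loopless := ⟨by rintro (a | a) h <;> exact (SimpleGraph.irrefl _) h⟩ }

theorem Iso.symm {G H : FGraph} : G.Iso H → H.Iso G
  | ⟨e⟩ => ⟨e.symm⟩

theorem iso_of_eq_bot {G H : FGraph} (hG : G.graph = ⊥) (hH : H.graph = ⊥)
    (hcard : Fintype.card G.V = Fintype.card H.V) : G.Iso H := by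
  obtain ⟨e⟩ := Fintype.card_eq.mp hcard
  exact ⟨⟨e, by simp [hG, hH]⟩⟩

theorem eq_bot_of_iso {G H : FGraph} (e : G.Iso H) (hG : G.graph = ⊥) : H.graph = ⊥ := by
  obtain ⟨e⟩ := e
  refine SimpleGraph.eq_bot_iff_forall_not_adj.mpr fun a b hab => ?_
  simpa [hG] using e.symm.map_adj_iff.mpr hab

theorem induce_graph_eq_bot_iff {G : FGraph} {S : Set G.V} :
    (G.induce S).graph = ⊥ ↔ G.graph.IsIndepSet S := by
  simp only [SimpleGraph.eq_bot_iff_forall_not_adj, SimpleGraph.isIndepSet_iff, Set.Pairwise]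
  exact ⟨fun h a ha b hb _ => h ⟨a, ha⟩ ⟨b, hb⟩,
    fun h a b hab => h a.2 b.2 (Subtype.coe_ne_coe.mpr hab.ne) hab⟩

theorem induce_range_iso {G K : FGraph} (f : G.graph ↪g K.graph) :
    (K.induce (Set.range f)).Iso G :=
  ⟨f.isoInduceRange.symm⟩

section Join

variable (G H : FGraph)

def joinInl : G.graph ↪g (G.join H).graph where
  toFun := Sum.inl
  inj' := Sum.inl_injective
  map_rel_iff' := Iff.rfl

def joinInr : H.graph ↪g (G.join H).graph where
  toFun := Sum.inr
  inj' := Sum.inr_injective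
  map_rel_iff' := Iff.rfl

theorem eq_range_of_isIndepSet_join [Nonempty G.V] [Nonempty H.V] {S : Set (G.join H).V}
    (hS : (G.join H).graph.IsIndepSet S) (hSc : (G.join H).graph.IsIndepSet Sᶜ) :
    S = Set.range Sum.inl ∨ S = Set.range Sum.inr := by
  obtain ⟨a₀⟩ := ‹Nonempty G.V›
  obtain ⟨b₀⟩ := ‹Nonempty H.V›
  have cross (a : G.V) (b : H.V) : Sum.inl a ∈ S ↔ Sum.inr b ∉ S :=
    SimpleGraph.mem_iff_notMem_of_adj hS hSc trivial
  have hinl (a : G.V) : Sum.inl a ∈ S ↔ Sum.inl a₀ ∈ S := (cross a b₀).trans (cross a₀ b₀).symm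
  by_cases h₀ : Sum.inl a₀ ∈ S
  · left
    ext (a | b)
    · exact iff_of_true ((hinl a).2 h₀) ⟨a, rfl⟩
    · exact iff_of_false ((cross a₀ b).1 h₀) (by rintro ⟨_, ⟨⟩⟩)
  · right
    ext (a | b)
    · exact iff_of_false (mt (hinl a).1 h₀) (by rintro ⟨_, ⟨⟩⟩)
    · exact iff_of_true (not_not.1 (mt (cross a₀ b).2 h₀)) ⟨b, rfl⟩

end Join

end FGraph

namespace GProp

open FGraph

def Edgeless (P : GProp) : Prop := ∀ G, P G → G.graph = ⊥

theorem prod_comm (P Q : GProp) : prod P Q = prod Q P := by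
  have swap {P Q : GProp} {G : FGraph} : prod P Q G → prod Q P G :=
    fun ⟨hG, S, hS, hSc⟩ => ⟨hG, Sᶜ, hSc, by rwa [compl_compl]⟩
  funext G
  exact propext ⟨swap, swap⟩

theorem isIndepSet_of_edgeless {P : GProp} (hP : P.Edgeless) {G : FGraph} {S : Set G.V}
    (h : S.Nonempty → P (G.induce S)) : G.graph.IsIndepSet S := by
  rcases S.eq_empty_or_nonempty with rfl | hS
  · exact Set.pairwise_empty _
  · exact induce_graph_eq_bot_iff.mp (hP _ (h hS))

theorem prod_join_of_mem {P Q : GProp} (hP : IsGProp P) (hQ : IsGProp Q) {G H : FGraph}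
    (hG : P G) (hH : Q H) : prod P Q (G.join H) := by
  have := hP.vertexNonempty G hG
  refine ⟨inferInstance, Set.range Sum.inl, fun _ => ?_, fun _ => ?_⟩
  · exact hP.isoClosed _ _ (induce_range_iso (joinInl G H)).symm hG
  · rw [Set.compl_range_inl]
    exact hQ.isoClosed _ _ (induce_range_iso (joinInr G H)).symm hH

theorem prod_join_iff {P Q : GProp} (hP : IsGProp P) (hQ : IsGProp Q) (hPe : P.Edgeless)
    (hQe : Q.Edgeless) {G H : FGraph} [Nonempty G.V] [Nonempty H.V] :
    prod P Q (G.join H) ↔ P G ∧ Q H ∨ P H ∧ Q G := by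
  refine ⟨fun ⟨_, S, hS, hSc⟩ => ?_, ?_⟩
  · rcases eq_range_of_isIndepSet_join G H (isIndepSet_of_edgeless hPe hS)
      (isIndepSet_of_edgeless hQe hSc) with rfl | rfl
    · rw [Set.compl_range_inl] at hSc
      exact .inl ⟨hP.isoClosed _ _ (induce_range_iso (joinInl G H)) (hS (Set.range_nonempty _)),
        hQ.isoClosed _ _ (induce_range_iso (joinInr G H)) (hSc (Set.range_nonempty _))⟩
    · rw [Set.compl_range_inr] at hSc
      exact .inr ⟨hP.isoClosed _ _ (induce_range_iso (joinInr G H)) (hS (Set.range_nonempty _)),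
        hQ.isoClosed _ _ (induce_range_iso (joinInl G H)) (hSc (Set.range_nonempty _))⟩
  · rintro (⟨hG, hH⟩ | ⟨hH, hG⟩)
    · exact prod_join_of_mem hP hQ hG hH
    · exact prod_comm Q P ▸ prod_join_of_mem hQ hP hG hH

theorem edgeless_of_prod_eq {P Q P' Q' : GProp} (hP : P.Edgeless) (hQ : Q.Edgeless)
    (hP' : IsGProp P') (hQ' : IsGProp Q') (h : prod P Q = prod P' Q') : P'.Edgeless := by
  intro G hG
  obtain ⟨H, hH⟩ := hQ'.nonempty
  obtain ⟨b⟩ := hQ'.vertexNonempty H hH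
  obtain ⟨-, S, hS, hSc⟩ := h ▸ prod_join_of_mem hP' hQ' hG hH
  have split {x y : (G.join H).V} (hxy : (G.join H).graph.Adj x y) : x ∈ S ↔ y ∉ S :=
    SimpleGraph.mem_iff_notMem_of_adj (isIndepSet_of_edgeless hP hS)
      (isIndepSet_of_edgeless hQ hSc) hxy
  -- an edge `a a'` of `G` would form a triangle with `b`
  refine SimpleGraph.eq_bot_iff_forall_not_adj.mpr fun a a' haa' => ?_
  have := split (x := .inl a) (y := .inr b) trivial
  have := split (x := .inl a') (y := .inr b) trivial
  have := split (x := .inl a) (y := .inl a') haa'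
  tauto

theorem mem_iff_edgeless_card {P : GProp} (hP : IsGProp P) (hPe : P.Edgeless) (G : FGraph) :
    P G ↔ Nonempty G.V ∧ G.graph = ⊥ ∧ P (edgeless (Fintype.card G.V)) := by
  have iso (hG : G.graph = ⊥) : G.Iso (edgeless (Fintype.card G.V)) :=
    iso_of_eq_bot hG rfl (card_edgeless _).symm
  exact ⟨fun h => ⟨hP.vertexNonempty G h, hPe G h, hP.isoClosed _ _ (iso (hPe G h)) h⟩,
    fun ⟨_, hG, h⟩ => hP.isoClosed _ _ (iso hG).symm h⟩

theorem ext_of_edgeless {P Q : GProp} (hP : IsGProp P) (hQ : IsGProp Q) (hPe : P.Edgeless)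
    (hQe : Q.Edgeless) (h : ∀ n, 1 ≤ n → (P (edgeless n) ↔ Q (edgeless n))) : P = Q := by
  funext G
  rw [mem_iff_edgeless_card hP hPe, mem_iff_edgeless_card hQ hQe]
  exact propext <| and_congr_right fun hG =>
    and_congr_right fun _ => h _ (Fintype.card_pos_iff.mpr hG)

end GProp

open FGraph GProp

theorem oprop_edgeless (r : ℕ∞) : (Oprop r).Edgeless := fun _ h => h.2.1

theorem isGProp_oprop {r : ℕ∞} (hr : 1 ≤ r) : IsGProp (Oprop r) where
  nonempty := ⟨edgeless 1, ⟨⟨0, one_pos⟩⟩, rfl, by rwa [card_edgeless, Nat.cast_one]⟩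
  vertexNonempty _ h := h.1
  isoClosed G H e h :=
    ⟨⟨e.some h.1.some⟩, eq_bot_of_iso e h.2.1, Fintype.card_congr e.some.toEquiv ▸ h.2.2⟩

theorem oprop_edgeless_iff {r : ℕ∞} {n : ℕ} (hn : 1 ≤ n) : Oprop r (edgeless n) ↔ n ≤ r :=
  ⟨fun h => card_edgeless n ▸ h.2.2, fun h => ⟨⟨⟨0, hn⟩⟩, rfl, (card_edgeless n).symm ▸ h⟩⟩

theorem eq_oprop_of_edgeless {Q : GProp} (hQ : IsGProp Q) (hQe : Q.Edgeless) {r : ℕ∞}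
    (hr : 1 ≤ r) (h : ∀ n : ℕ, 1 ≤ n → (Q (edgeless n) ↔ n ≤ r)) : Q = Oprop r :=
  ext_of_edgeless hQ (isGProp_oprop hr) hQe (oprop_edgeless r)
    fun n hn => (h n hn).trans (oprop_edgeless_iff hn).symm

section Sizes

variable {r s : ℕ∞} {A B : ℕ → Prop}

theorem iff_le_of_crosswise_iff_of_bounded (hr : 1 ≤ r) (hrs : r ≤ s)
    (hAB : ∀ p q : ℕ, 1 ≤ p → 1 ≤ q →
      ((p ≤ r ∧ q ≤ s ∨ q ≤ r ∧ p ≤ s) ↔ A p ∧ B q ∨ A q ∧ B p))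
    (hA : ∀ n : ℕ, 1 ≤ n → A n → n ≤ r) :
    (∀ n : ℕ, 1 ≤ n → (A n ↔ n ≤ r)) ∧ (∀ n : ℕ, 1 ≤ n → (B n ↔ n ≤ s)) := by
  have diag (n : ℕ) (hn : 1 ≤ n) (hnr : n ≤ r) : A n ∧ B n := by
    have := (hAB n n hn hn).mp (.inl ⟨hnr, hnr.trans hrs⟩)
    tauto
  have hr' : ((1 : ℕ) : ℕ∞) ≤ r := by rwa [Nat.cast_one]
  have one := diag 1 le_rfl hr'
  refine ⟨fun n hn => ⟨hA n hn, fun hnr => (diag n hn hnr).1⟩,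
    fun n hn => ⟨fun hB => ?_, fun hns => ?_⟩⟩
  · rcases (hAB 1 n le_rfl hn).mpr (.inl ⟨one.1, hB⟩) with ⟨-, hns⟩ | ⟨hnr, -⟩
    exacts [hns, hnr.trans hrs]
  · rcases (hAB n 1 hn le_rfl).mp (.inr ⟨hr', hns⟩) with ⟨hA', -⟩ | ⟨-, hB⟩
    exacts [(diag n hn (hA n hn hA')).2, hB]

theorem iff_le_of_crosswise_iff (hr : 1 ≤ r) (hs : 1 ≤ s)
    (hAB : ∀ p q : ℕ, 1 ≤ p → 1 ≤ q →
      ((p ≤ r ∧ q ≤ s ∨ q ≤ r ∧ p ≤ s) ↔ A p ∧ B q ∨ A q ∧ B p)) :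
    (∀ n : ℕ, 1 ≤ n → (A n ↔ n ≤ r)) ∧ (∀ n : ℕ, 1 ≤ n → (B n ↔ n ≤ s)) ∨
      (∀ n : ℕ, 1 ≤ n → (A n ↔ n ≤ s)) ∧ (∀ n : ℕ, 1 ≤ n → (B n ↔ n ≤ r)) := by
  wlog hrs : r ≤ s generalizing r s
  · exact (this hs hr (fun p q hp hq => Iff.trans (by tauto) (hAB p q hp hq))
      (le_of_not_ge hrs)).symm
  by_cases hA : ∀ n : ℕ, 1 ≤ n → A n → n ≤ r
  · exact .inl (iff_le_of_crosswise_iff_of_bounded hr hrs hAB hA)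
  · obtain ⟨m, hm, hAm, hmr⟩ : ∃ m : ℕ, 1 ≤ m ∧ A m ∧ ¬ m ≤ r := by simpa using hA
    have hB (n : ℕ) (hn : 1 ≤ n) (hBn : B n) : n ≤ r := by
      have := (hAB m n hm hn).mpr (.inl ⟨hAm, hBn⟩)
      tauto
    refine .inr (iff_le_of_crosswise_iff_of_bounded hr hrs (fun p q hp hq => ?_) hB).symm
    exact (hAB p q hp hq).trans (by tauto)

end Sizes

/-- if `O(r) ∘ O(s) = Q₁ ∘ Q₂` for graph properties `Q₁, Q₂`,
then `{Q₁, Q₂} = {O(r), O(s)}` as an unordered pair. -/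
theorem statement_4 (r s : ℕ∞) (hr : 1 ≤ r) (hs : 1 ≤ s)
    (Q₁ Q₂ : GProp) (hQ₁ : IsGProp Q₁) (hQ₂ : IsGProp Q₂)
    (h : GProp.prod (Oprop r) (Oprop s) = GProp.prod Q₁ Q₂) :
    (Q₁ = Oprop r ∧ Q₂ = Oprop s) ∨ (Q₁ = Oprop s ∧ Q₂ = Oprop r) := by
  have e₁ : Q₁.Edgeless := edgeless_of_prod_eq (oprop_edgeless r) (oprop_edgeless s) hQ₁ hQ₂ h
  have e₂ : Q₂.Edgeless := edgeless_of_prod_eq (oprop_edgeless s) (oprop_edgeless r) hQ₂ hQ₁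
    (by rw [prod_comm, h, prod_comm])
  have hsizes (p q : ℕ) (hp : 1 ≤ p) (hq : 1 ≤ q) :
      ((p : ℕ∞) ≤ r ∧ (q : ℕ∞) ≤ s ∨ (q : ℕ∞) ≤ r ∧ (p : ℕ∞) ≤ s) ↔
        Q₁ (edgeless p) ∧ Q₂ (edgeless q) ∨ Q₁ (edgeless q) ∧ Q₂ (edgeless p) := by
    have : Nonempty (edgeless p).V := ⟨⟨0, hp⟩⟩
    have : Nonempty (edgeless q).V := ⟨⟨0, hq⟩⟩
    rw [← oprop_edgeless_iff (r := r) hp, ← oprop_edgeless_iff (r := s) hq,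
      ← oprop_edgeless_iff (r := r) hq, ← oprop_edgeless_iff (r := s) hp,
      ← prod_join_iff (isGProp_oprop hr) (isGProp_oprop hs) (oprop_edgeless r) (oprop_edgeless s),
      h, prod_join_iff hQ₁ hQ₂ e₁ e₂]
  rcases iff_le_of_crosswise_iff hr hs hsizes with ⟨h₁, h₂⟩ | ⟨h₁, h₂⟩
  · exact .inl ⟨eq_oprop_of_edgeless hQ₁ e₁ hr h₁, eq_oprop_of_edgeless hQ₂ e₂ hs h₂⟩
  · exact .inr ⟨eq_oprop_of_edgeless hQ₁ e₁ hs h₁, eq_oprop_of_edgeless hQ₂ e₂ hr h₂⟩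
end

section
/- Let P be an indiscompositive graph property and let G ∈ P be a graph with vertices v₁,…,v_k. Then there exists a countably infinite graph X, with vertex set partitioned into copies G¹,G²,… each labelled v₁ⁱ,…,v_kⁱ, which is uniform for G — that is, (i) for each i, the map v_xⁱ ↦ v_x is an isomorphism from the subgraph of X induced on {v₁ⁱ,…,v_kⁱ} to G, and (ii) for all p < q, the map sending v_xᵖ ↦ v_x¹ and v_xq ↦ v_x² is an isomorphism from the subgraph of X induced on copies p and q to the subgraph of X induced on copies 1 and 2 — and such that every finite induced subgraph of X belongs to P. -/
attribute [local instance] Classical.propDecidable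

open SimpleGraph

/-- `P` is indiscompositive (induced-hereditary disjoint compositive):
induced-hereditary, and any two members of `P` occur as vertex-disjoint
induced subgraphs of some member of `P`. -/
def Indiscompositive (P : GProp) : Prop :=
  IndHereditary P ∧ ∀ G H, P G → P H → ∃ K, P K ∧
    ∃ (f : G.graph ↪g K.graph) (g : H.graph ↪g K.graph), ∀ a b, f a ≠ g b

/-!
Add copies of `G` one at a time: indiscompositivity puts the graph built on the first `n`
copies and a fresh copy of `G` disjointly into a member of `P`, which decides the edges of copy
`n + 1`. In the limit graph every finite induced subgraph lies in `P`. Colour each pair `p < q`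
of copies by the adjacency pattern between them; there are finitely many colours, so infinite
Ramsey gives infinitely many copies whose pairs all have the same colour, and the limit graph
restricted to those copies is `X`.
-/

theorem Set.Infinite.exists_infinite_inter_fiber {α C : Type*} [Finite C] {S : Set α}
    (hS : S.Infinite) (f : α → C) : ∃ c, (S ∩ f ⁻¹' {c}).Infinite := by
  by_contra! h
  exact hS ((Set.finite_iUnion h).subset fun x hx => Set.mem_iUnion.2 ⟨f x, hx, rfl⟩)

theorem exists_seq_of_forall_exists_succ {α : Type*} {p : ℕ → α → Prop}
    {R : ℕ → α → α → Prop} (h₀ : ∃ a, p 0 a) (step : ∀ n a, p n a → ∃ b, p (n + 1) b ∧ R n a b) :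
    ∃ s : ℕ → α, ∀ n, p n (s n) ∧ R n (s n) (s (n + 1)) := by
  obtain ⟨a₀, ha₀⟩ := h₀
  choose! next hnext using step
  let s : ℕ → α := fun n => Nat.rec a₀ next n
  have hs : ∀ n, p n (s n) := fun n => Nat.rec ha₀ (fun n ih => (hnext n _ ih).1) n
  exact ⟨s, fun n => ⟨hs n, (hnext n _ (hs n)).2⟩⟩

section Ramsey

variable {C : Type*} [Finite C] (f : ℕ → ℕ → C)

theorem Set.Infinite.exists_color_infinite {S : Set ℕ} (hS : S.Infinite) (a : ℕ) :
    ∃ c, {x ∈ S | a < x ∧ f a x = c}.Infinite := by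
  obtain ⟨c, hc⟩ := (hS.sdiff (Set.finite_Iic a)).exists_infinite_inter_fiber (f a)
  refine ⟨c, hc.mono ?_⟩
  rintro x ⟨⟨hxS, hxa⟩, rfl⟩
  exact ⟨hxS, not_le.1 hxa, rfl⟩

/-- Take the least element `a` of an infinite set and pass to the infinitely many larger
elements on which `f a` takes one colour; repeat. -/
theorem exists_strictMono_color_eq_left :
    ∃ (t : ℕ → ℕ) (col : ℕ → C), StrictMono t ∧ ∀ i j, i < j → f (t i) (t j) = col i := by
  obtain ⟨S, hS⟩ := exists_seq_of_forall_exists_succ (p := fun _ S => S.Infinite)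
    (R := fun _ S S' => ∃ c, S' ⊆ {x ∈ S | sInf S < x ∧ f (sInf S) x = c})
    ⟨_, Set.infinite_univ⟩ fun _ S hS => by
      obtain ⟨c, hc⟩ := hS.exists_color_infinite f (sInf S)
      exact ⟨_, hc, c, subset_rfl⟩
  choose col hcol using fun n => (hS n).2
  have hanti : Antitone S := antitone_nat_of_succ_le fun n x hx => (hcol n hx).1
  have hmem : ∀ n, sInf (S n) ∈ S n := fun n => Nat.sInf_mem (hS n).1.nonempty
  have hpair : ∀ i j, i < j → sInf (S i) < sInf (S j) ∧ f (sInf (S i)) (sInf (S j)) = col i :=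
    fun i j hij => (hcol i (hanti hij (hmem j))).2
  exact ⟨fun n => sInf (S n), col, strictMono_nat_of_lt_succ fun n => (hpair n _ n.lt_succ_self).1,
    fun i j hij => (hpair i j hij).2⟩

theorem exists_strictMono_color_eq :
    ∃ (c : C) (t : ℕ → ℕ), StrictMono t ∧ ∀ i j, i < j → f (t i) (t j) = c := by
  obtain ⟨t, col, ht, htcol⟩ := exists_strictMono_color_eq_left f
  obtain ⟨c, hc⟩ := Finite.exists_infinite_fiber col
  obtain ⟨φ, hφ, hφc⟩ := Filter.extraction_of_frequently_atTop
    (Nat.frequently_atTop_iff_infinite.2 (Set.infinite_coe_iff.1 hc))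
  exact ⟨c, t ∘ φ, ht.comp hφ, fun i j hij => (htcol _ _ (hφ hij)).trans (hφc i)⟩

end Ramsey

section Age

variable {V : Type} {P : GProp}

noncomputable def SimpleGraph.induceFGraph (Z : SimpleGraph V) (s : Finset V) : FGraph :=
  ⟨↥(s : Set V), Z.induce s⟩

def SimpleGraph.AgeIn (P : GProp) (Z : SimpleGraph V) : Prop :=
  ∀ s : Finset V, s.Nonempty → P (Z.induceFGraph s)

theorem IndHereditary.induceFGraph_comap (hP : IndHereditary P) {H : FGraph} (hH : P H)
    {F : V → H.V} {s : Finset V} (hF : Set.InjOn F s) (hs : s.Nonempty) :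
    P ((H.graph.comap F).induceFGraph s) :=
  hP H _ hH ⟨⟨⟨fun a => F a.1, hF.injective⟩, Iff.rfl⟩⟩ hs.coe_sort

theorem IndHereditary.induceFGraph_mono (hP : IndHereditary P) {Z : SimpleGraph V}
    {s t : Finset V} (hst : s ⊆ t) (ht : P (Z.induceFGraph t)) (hs : s.Nonempty) :
    P (Z.induceFGraph s) :=
  hP _ _ ht ⟨Z.induceHomOfLE (Finset.coe_subset.2 hst)⟩ hs.coe_sort

theorem SimpleGraph.AgeIn.comap {W : Type} (hP : IndHereditary P) {Z : SimpleGraph W}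
    (hZ : Z.AgeIn P) (f : V ↪ W) : (Z.comap f).AgeIn P := fun s hs =>
  hP _ _ (hZ (s.map f) (hs.map)) ⟨⟨⟨fun a => ⟨f a.1, Finset.mem_map_of_mem f a.2⟩,
    fun _ _ h => Subtype.ext (f.injective (congrArg Subtype.val h))⟩, Iff.rfl⟩⟩ hs.coe_sort

theorem SimpleGraph.ageIn_of_forall_subset {ι : Type*} (hP : IndHereditary P)
    {Z : SimpleGraph V} (B : ι → Finset V) (hB : ∀ s : Finset V, ∃ i, s ⊆ B i)
    (h : ∀ i, P (Z.induceFGraph (B i))) : Z.AgeIn P := fun s hs =>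
  let ⟨i, hi⟩ := hB s
  hP.induceFGraph_mono hi (h i) hs

end Age

theorem SimpleGraph.exists_limit {V : Type*} (r : V → ℕ) (Z : ℕ → SimpleGraph V)
    (h : ∀ n u v, r u ≤ n → r v ≤ n → ((Z (n + 1)).Adj u v ↔ (Z n).Adj u v)) :
    ∃ X : SimpleGraph V, ∀ n u v, r u ≤ n → r v ≤ n → (X.Adj u v ↔ (Z n).Adj u v) := by
  have stable : ∀ m n, m ≤ n → ∀ u v, r u ≤ m → r v ≤ m → ((Z n).Adj u v ↔ (Z m).Adj u v) := by
    intro m n hmn u v hu hv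
    induction n, hmn using Nat.le_induction with
    | base => rfl
    | succ n hmn ih => exact (h n u v (hu.trans hmn) (hv.trans hmn)).trans ih
  refine ⟨{ Adj := fun u v => (Z (max (r u) (r v))).Adj u v
            symm := ⟨fun u v huv => by rw [max_comm]; exact huv.symm⟩
            loopless := ⟨fun u => (Z _).loopless.irrefl _⟩ }, fun n u v hu hv => ?_⟩
  exact (stable _ n (max_le hu hv) u v (le_max_left _ _) (le_max_right _ _)).symm

section Layers

variable {P : GProp} {k : ℕ} {G : SimpleGraph (Fin k)}

def box (k n : ℕ) : Finset (ℕ × Fin k) := Finset.range n ×ˢ Finset.univ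

@[simp] theorem mem_box {n : ℕ} {u : ℕ × Fin k} : u ∈ box k n ↔ u.1 < n := by
  simp [box]

theorem box_nonempty (hk : 0 < k) (n : ℕ) : (box k (n + 1)).Nonempty :=
  ⟨(0, ⟨0, hk⟩), by simp⟩

theorem exists_subset_box (s : Finset (ℕ × Fin k)) : ∃ n, s ⊆ box k (n + 1) :=
  ⟨s.sup Prod.fst, fun _ hu => mem_box.2 (Nat.lt_succ_of_le (Finset.le_sup hu))⟩

def HasLayers (G : SimpleGraph (Fin k)) (Z : SimpleGraph (ℕ × Fin k)) : Prop :=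
  ∀ i x y, Z.Adj (i, x) (i, y) ↔ G.Adj x y

def IsStage (P : GProp) (G : SimpleGraph (Fin k)) (n : ℕ) (Z : SimpleGraph (ℕ × Fin k)) :
    Prop :=
  HasLayers G Z ∧ P (Z.induceFGraph (box k (n + 1)))

theorem isStage_zero (hP : IndHereditary P) (hG : P ⟨Fin k, G⟩) (hk : 0 < k) :
    IsStage P G 0 (G.comap Prod.snd) :=
  ⟨fun _ _ _ => Iff.rfl, hP.induceFGraph_comap (H := ⟨Fin k, G⟩) hG
    (fun u hu v hv huv => Prod.ext (by simp_all) huv) (box_nonempty hk 0)⟩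

/-- Indiscompositivity puts the current stage and a fresh copy of `G` disjointly into some
`K ∈ P`; pulling `K` back along the resulting map gives the next stage. -/
theorem IsStage.exists_succ (hind : Indiscompositive P) (hG : P ⟨Fin k, G⟩) (hk : 0 < k)
    {n : ℕ} {Z : SimpleGraph (ℕ × Fin k)} (hZ : IsStage P G n Z) :
    ∃ Z', IsStage P G (n + 1) Z' ∧ ∀ u v, u.1 ≤ n → v.1 ≤ n → (Z'.Adj u v ↔ Z.Adj u v) := by
  obtain ⟨K, hK, f, g, hfg⟩ := hind.2 _ _ hZ.2 hG
  let F : ℕ × Fin k → K.V := fun u => if h : u ∈ box k (n + 1) then f ⟨u, h⟩ else g u.2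
  have hF_old : ∀ u (hu : u.1 ≤ n), F u = f ⟨u, mem_box.2 (Nat.lt_succ_of_le hu)⟩ :=
    fun _ _ => dif_pos _
  have hF_new : ∀ u : ℕ × Fin k, n < u.1 → F u = g u.2 :=
    fun _ hu => dif_neg (by simpa using hu)
  have hagree : ∀ u v, u.1 ≤ n → v.1 ≤ n → ((K.graph.comap F).Adj u v ↔ Z.Adj u v) :=
    fun u v hu hv => by rw [comap_adj, hF_old u hu, hF_old v hv]; exact f.map_adj_iff
  have hinj : Set.InjOn F (box k (n + 2)) := by
    intro u hu v hv huv
    simp only [Finset.mem_coe, mem_box] at hu hv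
    rcases le_or_gt u.1 n with hu' | hu' <;> rcases le_or_gt v.1 n with hv' | hv'
    · rw [hF_old u hu', hF_old v hv'] at huv
      exact congrArg Subtype.val (f.injective huv)
    · rw [hF_old u hu', hF_new v hv'] at huv
      exact absurd huv (hfg _ _)
    · rw [hF_new u hu', hF_old v hv'] at huv
      exact absurd huv.symm (hfg _ _)
    · rw [hF_new u hu', hF_new v hv'] at huv
      exact Prod.ext (by omega) (g.injective huv)
  refine ⟨K.graph.comap F, ⟨fun i x y => ?_, hind.1.induceFGraph_comap hK hinj
    (box_nonempty hk _)⟩, hagree⟩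
  rcases le_or_gt i n with hi | hi
  · exact (hagree _ _ hi hi).trans (hZ.1 i x y)
  · rw [comap_adj, hF_new _ hi, hF_new _ hi]
    exact g.map_adj_iff

theorem exists_hasLayers_ageIn (hind : Indiscompositive P) (hG : P ⟨Fin k, G⟩) (hk : 0 < k) :
    ∃ Z, HasLayers G Z ∧ Z.AgeIn P := by
  obtain ⟨Zs, hZs⟩ := exists_seq_of_forall_exists_succ (p := IsStage P G)
    (R := fun n Z Z' => ∀ u v : ℕ × Fin k, u.1 ≤ n → v.1 ≤ n → (Z'.Adj u v ↔ Z.Adj u v))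
    ⟨_, isStage_zero hind.1 hG hk⟩ fun _ _ hZ => hZ.exists_succ hind hG hk
  obtain ⟨Z, hZ⟩ := SimpleGraph.exists_limit Prod.fst Zs fun n => (hZs n).2
  have hbox : ∀ n, Z.induceFGraph (box k (n + 1)) = (Zs n).induceFGraph (box k (n + 1)) := by
    intro n
    simp only [induceFGraph]
    congr 1
    ext a b
    exact hZ n _ _ (Nat.lt_succ_iff.1 (mem_box.1 a.2)) (Nat.lt_succ_iff.1 (mem_box.1 b.2))
  refine ⟨Z, fun i x y => (hZ i _ _ le_rfl le_rfl).trans ((hZs i).1.1 i x y),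
    ageIn_of_forall_subset hind.1 _ exists_subset_box fun n => ?_⟩
  rw [hbox]
  exact (hZs n).1.2

end Layers

/-- if `P` is indiscompositive and `G ∈ P` has vertices
`v₁, …, v_k`, then there is a countably infinite graph `X`, made of copies
`G¹, G², …` of `G` (the vertex `(i, x)` playing the role of `v_xⁱ`), which is
uniform for `G`: (i) each copy induces `G` via `v_xⁱ ↦ v_x`, and (ii) for all
`p < q`, `v_xᵖ ↦ v_x¹, v_x^q ↦ v_x²` is an isomorphism from the subgraph
induced on copies `p, q` to the one induced on copies `1, 2`; and every finite
(nonempty) induced subgraph of `X` belongs to `P`. -/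
theorem statement_11 (P : GProp) (hP : IsGProp P) (hind : Indiscompositive P)
    (k : ℕ) (G : SimpleGraph (Fin k)) (hG : P ⟨Fin k, G⟩) :
    ∃ X : SimpleGraph (ℕ × Fin k),
      (∀ (i : ℕ) (x y : Fin k), X.Adj (i, x) (i, y) ↔ G.Adj x y) ∧
      (∀ p q : ℕ, p < q → ∀ x y : Fin k,
        X.Adj (p, x) (q, y) ↔ X.Adj (0, x) (1, y)) ∧
      (∀ s : Finset (ℕ × Fin k), s.Nonempty →
        P ⟨↥(s : Set (ℕ × Fin k)), X.induce (s : Set (ℕ × Fin k))⟩) := by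
  have hk : 0 < k := Fin.pos_iff_nonempty.2 (hP.vertexNonempty _ hG)
  obtain ⟨Z, hlayers, hage⟩ := exists_hasLayers_ageIn hind hG hk
  obtain ⟨c, t, ht, htc⟩ :=
    exists_strictMono_color_eq fun p q (x y : Fin k) => Z.Adj (p, x) (q, y)
  have hcross : ∀ p q, p < q → ∀ x y, Z.Adj (t p, x) (t q, y) ↔ c x y :=
    fun p q hpq x y => Iff.of_eq (congrFun₂ (htc p q hpq) x y)
  refine ⟨Z.comap (Function.Embedding.prodMap ⟨t, ht.injective⟩ (Function.Embedding.refl _)),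
    fun i => hlayers (t i),
    fun p q hpq x y => (hcross p q hpq x y).trans (hcross 0 1 one_pos x y).symm,
    hage.comap hind.1 _⟩
end

section
/- Let P be a hereditary graph property not containing all graphs, let G ∈ M*(P) and H ∈ P with G a subgraph of H. Then dc(H) ≤ dc(G). Moreover, if dc(H) = dc(G) = n, with G = G₁+⋯+G_n and H = H₁+⋯+H_n the respective expressions as joins of ind-parts, then the ind-parts of H can be relabelled so that Gᵢ is an induced subgraph of Hᵢ for each i. -/
attribute [local instance] Classical.propDecidable

open SimpleGraph

/-- `H + e`: the graph obtained from `H` by adding the edge `{a, b}`. -/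
def addEdge (H : FGraph) (a b : H.V) : FGraph :=
  ⟨H.V, H.graph ⊔ SimpleGraph.fromEdgeSet {s(a, b)}⟩

/-- `G` is `P`-maximal: `G ∈ P` but adding any edge of the complement of `G`
leaves `P`. -/
def PMaximal (P : GProp) (G : FGraph) : Prop :=
  P G ∧ ∀ a b : G.V, a ≠ b → ¬ G.graph.Adj a b → ¬ P (addEdge G a b)

/-- `c(P)`: the largest `r` such that the complete graph `K_r` belongs to `P`. -/
noncomputable def cNum (P : GProp) : ℕ :=
  sSup {r : ℕ | P ⟨Fin r, (⊤ : SimpleGraph (Fin r))⟩}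

/-- `G ∈ M*(P)`: `G` is `P`-maximal with at least `c(P)` vertices. -/
def PMaxStar (P : GProp) (G : FGraph) : Prop :=
  PMaximal P G ∧ cNum P ≤ Fintype.card G.V

/-- `dc(G)`: the number of ind-parts of `G`, i.e. the number of connected
components of the complement of `G`.  The ind-parts themselves are the
subgraphs induced on the supports of these components. -/
noncomputable def dc (G : FGraph) : ℕ := Fintype.card (G.graphᶜ.ConnectedComponent)


/-!
An injective homomorphism `f : G → H` from a `P`-maximal `G` into a graph `H ∈ P` reflects
adjacency, since otherwise `G + ab` would be a subgraph of `H`. Moreover no vertex `v` of `H`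
is adjacent to all of `f(G)`: if `G` is complete, `f(G) ∪ {v}` is a clique on
`|G| + 1 > c(P)` vertices; otherwise moving one end `b` of a non-edge `ab` of `G` onto `v`
embeds `G + ab` into `H`. So `f` is an embedding of the complements under which every vertex
of `Hᶜ` equals or is adjacent to an image vertex. It therefore maps the components of `Gᶜ`
(the ind-parts of `G`) onto those of `Hᶜ`, bijectively when their numbers agree, and restricts
to induced embeddings of corresponding ind-parts.
-/

theorem Function.Injective.update_of_notMem_range {α β : Type*} [DecidableEq α] {f : α → β}
    (hf : Function.Injective f) (a : α) {b : β} (hb : b ∉ Set.range f) :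
    Function.Injective (Function.update f a b) := by
  intro x y hxy
  by_cases hx : x = a <;> by_cases hy : y = a <;>
    simp only [Function.update_apply, hx, hy, if_true, if_false] at hxy
  · exact hx.trans hy.symm
  · exact absurd ⟨y, hxy.symm⟩ hb
  · exact absurd ⟨x, hxy⟩ hb
  · exact hf hxy

namespace SimpleGraph

variable {V W : Type*} {G : SimpleGraph V} {G' : SimpleGraph W}

def Embedding.induceOfMapsTo (e : G ↪g G') {s : Set V} {t : Set W} (h : Set.MapsTo e s t) :
    G.induce s ↪g G'.induce t where
  toFun := h.restrict e s t
  inj' := (h.restrict_inj).2 e.injective.injOn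
  map_rel_iff' := e.map_adj_iff

theorem ConnectedComponent.map_surjective_of_reachable (φ : G →g G')
    (h : ∀ w, ∃ v, G'.Reachable (φ v) w) :
    Function.Surjective (ConnectedComponent.map φ) := by
  refine ConnectedComponent.ind fun w => ?_
  obtain ⟨v, hv⟩ := h w
  exact ⟨G.connectedComponentMk v, ConnectedComponent.sound hv⟩

theorem ConnectedComponent.mapsTo_supp_map (φ : G →g G') (c : G.ConnectedComponent) :
    Set.MapsTo φ c.supp (c.map φ).supp := by
  rintro v rfl
  rfl

theorem not_cliqueFree_card_succ [Fintype W]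
    (f : (⊤ : SimpleGraph W) →g G) {v : V} (hv : ∀ w, G.Adj v (f w)) :
    ¬ G.CliqueFree (Fintype.card W + 1) := by
  classical
  have hvf : v ∉ Finset.univ.map ⟨f, f.injective_of_top_hom⟩ := by
    simpa using fun w h => (hv w).ne h.symm
  intro h
  refine h (insert v (Finset.univ.map ⟨f, f.injective_of_top_hom⟩)) ⟨?_, ?_⟩
  · rw [Finset.coe_insert, isClique_insert]
    refine ⟨?_, fun _ hw _ => ?_⟩
    · simpa [IsClique, Set.Pairwise] using
        fun a b hab => f.map_adj ((top_adj a b).2 (hab ∘ congrArg f))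
    · obtain ⟨w, -, rfl⟩ := Finset.mem_map.1 hw
      exact hv w
  · rw [Finset.card_insert_of_notMem hvf, Finset.card_map, Finset.card_univ]

end SimpleGraph

open SimpleGraph

section
variable {P : GProp}

theorem Hereditary.bddAbove_complete (hher : Hereditary P)
    (hnotall : ¬ ∀ G : FGraph, Nonempty G.V → P G) :
    BddAbove {r : ℕ | P ⟨Fin r, ⊤⟩} := by
  push Not at hnotall
  obtain ⟨F, hFne, hF⟩ := hnotall
  refine ⟨Fintype.card F.V, fun r hr => ?_⟩
  by_contra! hlt
  obtain ⟨e⟩ :=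
    Function.Embedding.nonempty_of_card_le (hlt.le.trans_eq (Fintype.card_fin r).symm)
  have hFsub : F.IsSub ⟨Fin r, ⊤⟩ := ⟨⟨e, fun hab => e.injective.ne hab.ne⟩, e.injective⟩
  exact hF (hher _ F hr hFsub hFne)

theorem Hereditary.complete_mem_of_not_cliqueFree (hher : Hereditary P) {H : FGraph} (hH : P H)
    {n : ℕ} (hn : 0 < n) (h : ¬ H.graph.CliqueFree n) : P ⟨Fin n, ⊤⟩ :=
  let e := topEmbeddingOfNotCliqueFree h
  hher H _ hH ⟨e.toHom, e.injective⟩ ⟨⟨0, hn⟩⟩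

theorem Hereditary.addEdge_mem (hher : Hereditary P) {G H : FGraph} (hH : P H)
    (g : G.V → H.V) (hg : Function.Injective g)
    (hmap : ∀ x y, G.graph.Adj x y → H.graph.Adj (g x) (g y)) {a b : G.V}
    (hab : H.graph.Adj (g a) (g b)) : P (addEdge G a b) := by
  refine hher H (addEdge G a b) hH ⟨⟨g, ?_⟩, hg⟩ ⟨a⟩
  rintro (x y : G.V) (hxy | ⟨hxy, -⟩)
  · exact hmap x y hxy
  · rcases Sym2.eq_iff.1 (Set.mem_singleton_iff.1 hxy) with ⟨rfl, rfl⟩ | ⟨rfl, rfl⟩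
    · exact hab
    · exact hab.symm

theorem PMaximal.adj_of_adj_map (hher : Hereditary P) {G H : FGraph} (hG : PMaximal P G)
    (hH : P H) (f : G.graph →g H.graph) (hf : Function.Injective f) {a b : G.V}
    (hab : H.graph.Adj (f a) (f b)) : G.graph.Adj a b := by
  by_contra hnadj
  exact hG.2 a b (fun h => hab.ne (congrArg f h)) hnadj
    (hher.addEdge_mem hH f hf (fun _ _ => f.map_adj) hab)

def PMaximal.embeddingOfInjective (hher : Hereditary P) {G H : FGraph} (hG : PMaximal P G)
    (hH : P H) (f : G.graph →g H.graph) (hf : Function.Injective f) : G.graph ↪g H.graph where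
  toFun := f
  inj' := hf
  map_rel_iff' := ⟨hG.adj_of_adj_map hher hH f hf, f.map_adj⟩

theorem PMaxStar.exists_not_adj_map (hher : Hereditary P)
    (hnotall : ¬ ∀ G : FGraph, Nonempty G.V → P G) {G H : FGraph} (hG : PMaxStar P G)
    (hH : P H) (f : G.graph →g H.graph) (hf : Function.Injective f) (v : H.V) :
    ∃ a, ¬ H.graph.Adj v (f a) := by
  by_contra! hv
  have hvf : v ∉ Set.range f := by
    rintro ⟨a, rfl⟩
    exact (hv a).ne rfl
  by_cases hcomplete : ∀ a b : G.V, a ≠ b → G.graph.Adj a b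
  · have hK : P ⟨Fin (Fintype.card G.V + 1), ⊤⟩ :=
      hher.complete_mem_of_not_cliqueFree hH (Nat.succ_pos _)
        (not_cliqueFree_card_succ ⟨f, fun hab => f.map_adj (hcomplete _ _ hab)⟩ hv)
    have hKc : Fintype.card G.V + 1 ≤ cNum P := le_csSup (hher.bddAbove_complete hnotall) hK
    have := hG.2
    omega
  · push Not at hcomplete
    obtain ⟨a, b, hab, hnadj⟩ := hcomplete
    classical
    refine hG.1.2 a b hab hnadj (hher.addEdge_mem hH (Function.update f b v)
      (hf.update_of_notMem_range b hvf) (fun x y hxy => ?_) ?_)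
    · by_cases hx : x = b <;> by_cases hy : y = b <;>
        simp only [Function.update_apply, hx, hy, if_true, if_false]
      · exact absurd (hx.trans hy.symm) hxy.ne
      · exact hv y
      · exact (hv x).symm
      · exact f.map_adj hxy
    · simpa [Function.update_apply, hab] using (hv a).symm

end

theorem statement_15_general (P : GProp) (hher : Hereditary P)
    (hnotall : ¬ ∀ G : FGraph, Nonempty G.V → P G)
    (G H : FGraph) (hG : PMaxStar P G) (hH : P H) (hsub : G.IsSub H) :
    dc H ≤ dc G ∧
    (dc H = dc G →
      ∃ ψ : (G.graphᶜ.ConnectedComponent) ≃ (H.graphᶜ.ConnectedComponent),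
        ∀ c : G.graphᶜ.ConnectedComponent,
          Nonempty ((G.graph.induce c.supp) ↪g (H.graph.induce (ψ c).supp))) := by
  obtain ⟨f, hf⟩ := hsub
  let e : G.graph ↪g H.graph := hG.1.embeddingOfInjective hher hH f hf
  let φ := ConnectedComponent.map (Embedding.complEquiv e).toHom
  have hφ : Function.Surjective φ := by
    refine ConnectedComponent.map_surjective_of_reachable _ fun v => ?_
    obtain ⟨a, ha⟩ := hG.exists_not_adj_map hher hnotall hH f hf v
    refine ⟨a, ?_⟩
    by_cases hva : f a = v
    · exact hva ▸ Reachable.refl _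
    · exact Adj.reachable ⟨hva, fun h => ha h.symm⟩
  have hφ_bij (hdc : dc H = dc G) : φ.Bijective :=
    (Fintype.bijective_iff_surjective_and_card φ).2 ⟨hφ, hdc.symm⟩
  exact ⟨Fintype.card_le_of_surjective φ hφ, fun hdc =>
    ⟨.ofBijective φ (hφ_bij hdc), fun c => ⟨e.induceOfMapsTo (c.mapsTo_supp_map _)⟩⟩⟩

/-- if `P` is a hereditary graph property not containing all
graphs, `G ∈ M*(P)`, `H ∈ P` and `G` is a subgraph of `H`, then
`dc(H) ≤ dc(G)`; and if `dc(H) = dc(G)`, the ind-parts of `H` (indexed by the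
connected components of `Hᶜ`) can be relabelled by the ind-parts of `G` so
that each ind-part of `G` is an induced subgraph of the corresponding
ind-part of `H`. -/
theorem statement_15 (P : GProp) (hP : IsGProp P) (hher : Hereditary P)
    (hnotall : ¬ ∀ G : FGraph, Nonempty G.V → P G)
    (G H : FGraph) (hG : PMaxStar P G) (hH : P H) (hsub : G.IsSub H) :
    dc H ≤ dc G ∧
    (dc H = dc G →
      ∃ ψ : (G.graphᶜ.ConnectedComponent) ≃ (H.graphᶜ.ConnectedComponent),
        ∀ c : G.graphᶜ.ConnectedComponent,
          Nonempty ((G.graph.induce c.supp) ↪g (H.graph.induce (ψ c).supp))) :=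
  statement_15_general P hher hnotall G H hG hH hsub
end

section
/- Let P and Q be hereditary graph properties such that P∘Q does not contain all graphs. Then dc(P∘Q) ≥ dc(P) + dc(Q). -/
attribute [local instance] Classical.propDecidable

open SimpleGraph

/-- `dc(P) = min {dc(G) : G ∈ M*(P)}`. -/
noncomputable def dcP (P : GProp) : ℕ := sInf {n : ℕ | ∃ G, PMaxStar P G ∧ dc G = n}

/-! Let `G ∈ M*(P ∘ Q)` with `dc G = dc(P ∘ Q)`. Since `K_{c(P)+c(Q)} ∈ P ∘ Q`, the graph `G` has at
least `c(P) + c(Q)` vertices, so a partition `(A, B)` of `G` witnessing `G ∈ P ∘ Q` can be adjusted,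
by growing `A` to `c(P)` vertices or shrinking it until `B` has `c(Q)`, so that `|A| ≥ c(P)` and
`|B| ≥ c(Q)`. Maximality of `G` forces every edge between `A` and `B` (so `G` is the join of `G[A]`
and `G[B]`, and `dc G = dc G[A] + dc G[B]`) and makes `G[A]` `P`-maximal and `G[B]` `Q`-maximal.
Hence `G[A] ∈ M*(P)`, `G[B] ∈ M*(Q)`, and `dc(P) + dc(Q) ≤ dc G[A] + dc G[B] = dc G`. -/

namespace SimpleGraph

variable {V : Type*} {G : SimpleGraph V} {s : Set V}

lemma Walk.support_subset_of_adj_mem_iff (hs : ∀ a b, G.Adj a b → (a ∈ s ↔ b ∈ s)) {u v : V}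
    (p : G.Walk u v) (hu : u ∈ s) : ∀ x ∈ p.support, x ∈ s := by
  induction p with
  | nil => simpa
  | cons h _ ih =>
    simp only [Walk.support_cons, List.mem_cons, forall_eq_or_imp]
    exact ⟨hu, ih ((hs _ _ h).1 hu)⟩

lemma Reachable.induce_of_adj_mem_iff (hs : ∀ a b, G.Adj a b → (a ∈ s ↔ b ∈ s)) {u v : V}
    (h : G.Reachable u v) (hu : u ∈ s) : ∃ hv : v ∈ s, (G.induce s).Reachable ⟨u, hu⟩ ⟨v, hv⟩ := by
  obtain ⟨p⟩ := h
  have hp := p.support_subset_of_adj_mem_iff hs hu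
  exact ⟨hp v p.end_mem_support, ⟨p.induce s hp⟩⟩

lemma ConnectedComponent.map_induce_injective (hs : ∀ a b, G.Adj a b → (a ∈ s ↔ b ∈ s)) :
    Function.Injective (ConnectedComponent.map (Embedding.induce (G := G) s).toHom) := by
  refine ConnectedComponent.ind₂ fun u v h => ?_
  simp only [ConnectedComponent.map_mk, ConnectedComponent.eq] at h ⊢
  exact (h.induce_of_adj_mem_iff hs u.2).2

lemma card_connectedComponent_eq_add [Finite V] (hs : ∀ a b, G.Adj a b → (a ∈ s ↔ b ∈ s)) :
    Nat.card G.ConnectedComponent =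
      Nat.card (G.induce s).ConnectedComponent + Nat.card (G.induce sᶜ).ConnectedComponent := by
  have hsc (a b : V) (h : G.Adj a b) : a ∈ sᶜ ↔ b ∈ sᶜ := not_congr (hs a b h)
  let φ := Sum.elim (ConnectedComponent.map (Embedding.induce (G := G) s).toHom)
    (ConnectedComponent.map (Embedding.induce (G := G) sᶜ).toHom)
  have hφ : Function.Bijective φ := by
    refine ⟨(ConnectedComponent.map_induce_injective hs).sumElim
      (ConnectedComponent.map_induce_injective hsc) ?_, ?_⟩
    · refine ConnectedComponent.ind fun u => ConnectedComponent.ind fun v h => ?_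
      simp only [ConnectedComponent.map_mk, ConnectedComponent.eq] at h
      exact v.2 (h.induce_of_adj_mem_iff hs u.2).1
    · refine ConnectedComponent.ind fun v => ?_
      by_cases hv : v ∈ s
      · exact ⟨.inl (G.induce s |>.connectedComponentMk ⟨v, hv⟩), rfl⟩
      · exact ⟨.inr (G.induce sᶜ |>.connectedComponentMk ⟨v, hv⟩), rfl⟩
  rw [← Nat.card_sum, Nat.card_congr (Equiv.ofBijective φ hφ)]

end SimpleGraph

namespace FGraph

abbrev complete (r : ℕ) : FGraph := ⟨Fin r, ⊤⟩

lemma card_induce (G : FGraph) (s : Set G.V) : Fintype.card (G.induce s).V = s.ncard :=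
  Nat.card_eq_fintype_card.symm

lemma isSub_complete {H : FGraph} {r : ℕ} (h : Fintype.card H.V ≤ r) : H.IsSub (complete r) := by
  obtain ⟨f⟩ := Function.Embedding.nonempty_of_card_le (h.trans_eq (Fintype.card_fin r).symm)
  exact ⟨⟨f, fun hab => f.injective.ne hab.ne⟩, f.injective⟩

lemma induce_isSub (G : FGraph) (s : Set G.V) : (G.induce s).IsSub G :=
  ⟨(Embedding.induce (G := G.graph) s).toHom, (Embedding.induce (G := G.graph) s).injective⟩

lemma induce_isSub_induce (G : FGraph) {s t : Set G.V} (h : s ⊆ t) :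
    (G.induce s).IsSub (G.induce t) :=
  ⟨(induceHomOfLE G.graph h).toHom, (induceHomOfLE G.graph h).injective⟩

lemma addEdge_induce_of_notMem (G : FGraph) {a b : G.V} {s : Set G.V} (h : a ∉ s ∨ b ∉ s) :
    (addEdge G a b).induce s = G.induce s := by
  unfold addEdge induce
  congr 1
  ext ⟨x, hx⟩ ⟨y, hy⟩
  simp only [comap_adj, Function.Embedding.coe_subtype, sup_adj, fromEdgeSet_adj,
    Set.mem_singleton_iff, Sym2.eq_iff]
  grind

lemma addEdge_induce (G : FGraph) {a b : G.V} {s : Set G.V} (ha : a ∈ s) (hb : b ∈ s) :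
    (addEdge G a b).induce s = addEdge (G.induce s) ⟨a, ha⟩ ⟨b, hb⟩ := by
  unfold addEdge induce
  congr 1
  ext ⟨x, hx⟩ ⟨y, hy⟩
  simp only [comap_adj, Function.Embedding.coe_subtype, sup_adj, fromEdgeSet_adj,
    Set.mem_singleton_iff, Sym2.eq_iff, Subtype.mk.injEq, ne_eq]

end FGraph

open FGraph

namespace Hereditary

variable {P Q : GProp}

lemma of_complete (hher : Hereditary P) {r : ℕ} (hr : P (complete r)) {H : FGraph}
    (hne : Nonempty H.V) (hcard : Fintype.card H.V ≤ r) : P H :=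
  hher _ H hr (isSub_complete hcard) hne

lemma complete_one (hP : IsGProp P) (hher : Hereditary P) : P (complete 1) := by
  obtain ⟨G, hG⟩ := hP.nonempty
  obtain ⟨v⟩ := hP.vertexNonempty G hG
  refine hher G _ hG ⟨⟨fun _ => v, fun hab => (hab.ne (Subsingleton.elim _ _)).elim⟩,
    fun _ _ _ => Subsingleton.elim _ _⟩ ⟨0⟩

lemma bddAbove_complete_s16 (hher : Hereditary P) {H : FGraph} (hne : Nonempty H.V) (hH : ¬ P H) :
    BddAbove {r | P (complete r)} :=
  ⟨Fintype.card H.V, fun _ hr => not_lt.1 fun hlt => hH (hher.of_complete hr hne hlt.le)⟩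


lemma induce (hher : Hereditary P) {G : FGraph} (hG : P G) {s : Set G.V} (hs : s.Nonempty) :
    P (G.induce s) :=
  hher G _ hG (G.induce_isSub s) hs.to_subtype

lemma induce_of_subset (hher : Hereditary P) {G : FGraph} {s t : Set G.V}
    (ht : P (G.induce t)) (hst : s ⊆ t) (hs : s.Nonempty) : P (G.induce s) :=
  hher _ _ ht (G.induce_isSub_induce hst) hs.to_subtype

lemma induce_preimage (hher : Hereditary P) {G H : FGraph} {f : H.graph →g G.graph}
    (hf : Function.Injective f) {t : Set G.V} (ht : P (G.induce t)) (hne : (f ⁻¹' t).Nonempty) :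
    P (H.induce (f ⁻¹' t)) :=
  hher _ _ ht ⟨induceHom f (Set.mapsTo_preimage f t),
    induceHom_injective f (Set.mapsTo_preimage f t) hf.injOn⟩ hne.to_subtype

protected lemma prod (hherP : Hereditary P) (hherQ : Hereditary Q) :
    Hereditary (GProp.prod P Q) := by
  rintro G H ⟨-, t, ht, htc⟩ ⟨f, hf⟩ hne
  refine ⟨hne, f ⁻¹' t, fun h => ?_, fun h => ?_⟩
  · exact hherP.induce_preimage hf (ht (h.image f |>.mono (Set.image_preimage_subset f t))) h
  · exact hherQ.induce_preimage (t := tᶜ) hf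
      (htc (h.image f |>.mono (Set.image_preimage_subset f tᶜ))) h

lemma one_le_cNum (hP : IsGProp P) (hher : Hereditary P) (hbdd : BddAbove {r | P (complete r)}) :
    1 ≤ cNum P :=
  le_csSup hbdd (hher.complete_one hP)

lemma complete_cNum (hP : IsGProp P) (hher : Hereditary P)
    (hbdd : BddAbove {r | P (complete r)}) : P (complete (cNum P)) :=
  Nat.sSup_mem ⟨1, hher.complete_one hP⟩ hbdd

lemma of_card_le_cNum (hP : IsGProp P) (hher : Hereditary P)
    (hbdd : BddAbove {r | P (complete r)}) {H : FGraph} (hne : Nonempty H.V)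
    (hcard : Fintype.card H.V ≤ cNum P) : P H :=
  hher.of_complete (hher.complete_cNum hP hbdd) hne hcard

lemma induce_of_subset_or_ncard_le (hP : IsGProp P) (hher : Hereditary P)
    (hbdd : BddAbove {r | P (complete r)}) {G : FGraph} {s t : Set G.V}
    (ht : t.Nonempty → P (G.induce t)) (hs : s.Nonempty) (h : s ⊆ t ∨ s.ncard ≤ cNum P) :
    P (G.induce s) := by
  rcases h with hst | hcard
  · exact hher.induce_of_subset (ht (hs.mono hst)) hst hs
  · exact of_card_le_cNum hP hher hbdd hs.to_subtype ((G.card_induce s).trans_le hcard)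

end Hereditary

namespace GProp

variable {P Q : GProp}

lemma prod_of_mem_left (hP : IsGProp P) (hher : Hereditary P) {G : FGraph} (hG : P G) :
    prod P Q G :=
  ⟨hP.vertexNonempty G hG, Set.univ, hher.induce hG, fun h => absurd h (by simp)⟩

lemma prod_of_mem_right (hQ : IsGProp Q) (hher : Hereditary Q) {G : FGraph} (hG : Q G) :
    prod P Q G :=
  ⟨hQ.vertexNonempty G hG, ∅, fun h => absurd h (by simp), hher.induce hG⟩

lemma prod_of_card_le_add (hherP : Hereditary P) (hherQ : Hereditary Q) {m n : ℕ}
    (hm : P (complete m)) (hn : Q (complete n)) {G : FGraph} (hne : Nonempty G.V)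
    (hcard : Fintype.card G.V ≤ m + n) : prod P Q G := by
  obtain ⟨s, -, hs⟩ := (Set.univ : Set G.V).exists_subset_card_eq (n := min (Nat.card G.V) m)
    (by simp)
  have hsum := Set.ncard_add_ncard_compl s
  rw [Nat.card_eq_fintype_card] at hs hsum
  refine ⟨hne, s, fun h => hherP.of_complete hm h.to_subtype ?_,
    fun h => hherQ.of_complete hn h.to_subtype ?_⟩
  · rw [card_induce]; omega
  · rw [card_induce]; omega

lemma cNum_add_le_cNum_prod (hP : IsGProp P) (hQ : IsGProp Q) (hherP : Hereditary P)
    (hherQ : Hereditary Q) (hbddP : BddAbove {r | P (complete r)})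
    (hbddQ : BddAbove {r | Q (complete r)}) (hbdd : BddAbove {r | prod P Q (complete r)}) :
    cNum P + cNum Q ≤ cNum (prod P Q) :=
  le_csSup hbdd <| prod_of_card_le_add hherP hherQ (hherP.complete_cNum hP hbddP)
    (hherQ.complete_cNum hQ hbddQ) ⟨⟨0, Nat.add_pos_left (hherP.one_le_cNum hP hbddP) _⟩⟩
    (Fintype.card_fin _).le

end GProp

lemma IsGProp.prod {P Q : GProp} (hP : IsGProp P) (hherP : Hereditary P) (hherQ : Hereditary Q) :
    IsGProp (GProp.prod P Q) := by
  obtain ⟨G, hG⟩ := hP.nonempty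
  refine ⟨⟨G, GProp.prod_of_mem_left hP hherP hG⟩, fun _ hG => hG.1, fun G H ⟨e⟩ hG => ?_⟩
  exact hherP.prod hherQ G H hG ⟨e.symm.toHom, e.symm.injective⟩ (hG.1.map e)

lemma GProp.exists_partition_of_cNum_add_le {P Q : GProp} (hP : IsGProp P) (hQ : IsGProp Q)
    (hherP : Hereditary P) (hherQ : Hereditary Q) (hbddP : BddAbove {r | P (complete r)})
    (hbddQ : BddAbove {r | Q (complete r)}) {G : FGraph} (hG : prod P Q G)
    (hcard : cNum P + cNum Q ≤ Fintype.card G.V) :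
    ∃ s : Set G.V, P (G.induce s) ∧ Q (G.induce sᶜ) ∧ cNum P ≤ s.ncard ∧ cNum Q ≤ sᶜ.ncard := by
  obtain ⟨-, s, hs, hsc⟩ := hG
  have hP1 := hherP.one_le_cNum hP hbddP
  have hQ1 := hherQ.one_le_cNum hQ hbddQ
  have hsum (u : Set G.V) : u.ncard + uᶜ.ncard = Fintype.card G.V := by
    rw [Set.ncard_add_ncard_compl, Nat.card_eq_fintype_card]
  have of_adjust (u : Set G.V) (hu : u ⊆ s ∨ u.ncard ≤ cNum P)
      (huc : uᶜ ⊆ sᶜ ∨ uᶜ.ncard ≤ cNum Q) (hPu : cNum P ≤ u.ncard) (hQu : cNum Q ≤ uᶜ.ncard) :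
      ∃ s : Set G.V, P (G.induce s) ∧ Q (G.induce sᶜ) ∧ cNum P ≤ s.ncard ∧ cNum Q ≤ sᶜ.ncard :=
    ⟨u, hherP.induce_of_subset_or_ncard_le hP hbddP hs
        (Set.nonempty_of_ncard_ne_zero (by omega)) hu,
      hherQ.induce_of_subset_or_ncard_le hQ hbddQ hsc
        (Set.nonempty_of_ncard_ne_zero (by omega)) huc, hPu, hQu⟩
  by_cases hgrow : s.ncard < cNum P
  · obtain ⟨u, hsu, -, hu⟩ := Set.exists_subsuperset_card_eq (Set.subset_univ s) hgrow.le
      (by rw [Set.ncard_univ, Nat.card_eq_fintype_card]; omega)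
    have := hsum u
    exact of_adjust u (Or.inr hu.le) (Or.inl (Set.compl_subset_compl.2 hsu)) hu.ge (by omega)
  by_cases hshrink : sᶜ.ncard < cNum Q
  · obtain ⟨u, hus, hu⟩ := Set.exists_subset_card_eq (s := s) (n := Fintype.card G.V - cNum Q)
      (by have := hsum s; omega)
    have := hsum u
    exact of_adjust u (Or.inl hus) (Or.inr (by omega)) (by omega) (by omega)
  exact of_adjust s (Or.inl subset_rfl) (Or.inl subset_rfl) (by omega) (by omega)

namespace FGraph

lemma induce_compl_graph (G : FGraph) (s : Set G.V) :
    (G.induce s).graphᶜ = G.graphᶜ.induce s := by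
  ext x y
  exact and_congr_left' Subtype.coe_injective.ne_iff.symm

lemma dc_eq_add_of_adj (G : FGraph) {s : Set G.V} (h : ∀ a ∈ s, ∀ b ∉ s, G.graph.Adj a b) :
    dc G = dc (G.induce s) + dc (G.induce sᶜ) := by
  simp only [dc, ← Nat.card_eq_fintype_card, induce_compl_graph]
  refine card_connectedComponent_eq_add fun a b hab => ⟨fun ha => ?_, fun hb => ?_⟩ <;>
    by_contra hn
  · exact hab.2 (h a ha b hn)
  · exact hab.2 (h b hb a hn).symm

end FGraph

lemma PMaximal.adj_of_addEdge {R : GProp} {G : FGraph} (hG : PMaximal R G) {a b : G.V}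
    (hab : a ≠ b) (h : R (addEdge G a b)) : G.graph.Adj a b :=
  not_not.1 fun hn => hG.2 a b hab hn h

namespace PMaximal

variable {P Q : GProp} {G : FGraph} {s : Set G.V}

lemma prod_adj (hG : PMaximal (GProp.prod P Q) G) (hs : P (G.induce s)) (hsc : Q (G.induce sᶜ))
    {a b : G.V} (ha : a ∈ s) (hb : b ∉ s) : G.graph.Adj a b :=
  hG.adj_of_addEdge (ne_of_mem_of_not_mem ha hb) ⟨hG.1.1, s,
    fun _ => (congrArg P (addEdge_induce_of_notMem G (Or.inr hb))).mpr hs,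
    fun _ => (congrArg Q (addEdge_induce_of_notMem G (Or.inl (not_not_intro ha)))).mpr hsc⟩

lemma prod_induce_left (hG : PMaximal (GProp.prod P Q) G) (hs : P (G.induce s))
    (hsc : Q (G.induce sᶜ)) : PMaximal P (G.induce s) :=
  ⟨hs, fun ⟨a, ha⟩ ⟨b, hb⟩ hab hnadj hadd => hnadj <|
    hG.adj_of_addEdge (a := a) (b := b) (fun h => hab (Subtype.ext h))
    ⟨hG.1.1, s, fun _ => (congrArg P (addEdge_induce G ha hb)).mpr hadd,
      fun _ => (congrArg Q (addEdge_induce_of_notMem G (Or.inl (not_not_intro ha)))).mpr hsc⟩⟩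

lemma prod_induce_right (hG : PMaximal (GProp.prod P Q) G) (hs : P (G.induce s))
    (hsc : Q (G.induce sᶜ)) : PMaximal Q (G.induce sᶜ) :=
  ⟨hsc, fun ⟨a, ha⟩ ⟨b, hb⟩ hab hnadj hadd => hnadj <|
    hG.adj_of_addEdge (a := a) (b := b) (fun h => hab (Subtype.ext h))
    ⟨hG.1.1, s, fun _ => (congrArg P (addEdge_induce_of_notMem G (Or.inl ha))).mpr hs,
      fun _ => (congrArg Q (addEdge_induce G ha hb)).mpr hadd⟩⟩

end PMaximal

lemma dcP_le {P : GProp} {G : FGraph} (hG : PMaxStar P G) : dcP P ≤ dc G :=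
  Nat.sInf_le ⟨G, hG, rfl⟩

lemma pMaxStar_complete_cNum {P : GProp} (h : P (complete (cNum P))) :
    PMaxStar P (complete (cNum P)) :=
  ⟨⟨h, fun _ _ hab hnadj _ => hnadj hab⟩, (Fintype.card_fin _).ge⟩

lemma exists_pMaxStar_dc_eq_dcP {P : GProp} (h : P (complete (cNum P))) :
    ∃ G, PMaxStar P G ∧ dc G = dcP P :=
  Nat.sInf_mem (s := {n | ∃ G, PMaxStar P G ∧ dc G = n})
    ⟨_, _, pMaxStar_complete_cNum h, rfl⟩

/-- if `P` and `Q` are hereditary graph properties and `P ∘ Q`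
does not contain all graphs, then `dc(P ∘ Q) ≥ dc(P) + dc(Q)`. -/
theorem statement_16 (P Q : GProp) (hP : IsGProp P) (hQ : IsGProp Q)
    (hherP : Hereditary P) (hherQ : Hereditary Q)
    (hnotall : ¬ ∀ G : FGraph, Nonempty G.V → GProp.prod P Q G) :
    dcP P + dcP Q ≤ dcP (GProp.prod P Q) := by
  push Not at hnotall
  obtain ⟨H, hne, hH⟩ := hnotall
  have hher := hherP.prod hherQ
  have hbdd := hher.bddAbove_complete_s16 hne hH
  have hbddP := hherP.bddAbove_complete_s16 hne fun h => hH (GProp.prod_of_mem_left hP hherP h)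
  have hbddQ := hherQ.bddAbove_complete_s16 hne fun h => hH (GProp.prod_of_mem_right hQ hherQ h)
  obtain ⟨G, hG, hdc⟩ :=
    exists_pMaxStar_dc_eq_dcP (hher.complete_cNum (hP.prod hherP hherQ) hbdd)
  obtain ⟨s, hs, hsc, hcs, hcsc⟩ :=
    GProp.exists_partition_of_cNum_add_le hP hQ hherP hherQ hbddP hbddQ hG.1.1
      ((GProp.cNum_add_le_cNum_prod hP hQ hherP hherQ hbddP hbddQ hbdd).trans hG.2)
  calc dcP P + dcP Q ≤ dc (G.induce s) + dc (G.induce sᶜ) :=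
        add_le_add (dcP_le ⟨hG.1.prod_induce_left hs hsc, hcs.trans_eq (G.card_induce s).symm⟩)
          (dcP_le ⟨hG.1.prod_induce_right hs hsc, hcsc.trans_eq (G.card_induce sᶜ).symm⟩)
    _ = dc G := (G.dc_eq_add_of_adj fun _ ha _ hb => hG.1.prod_adj hs hsc ha hb).symm
    _ = dcP (GProp.prod P Q) := hdc
end

section
/- Let P be an induced-hereditary graph property. Then P is hereditary if and only if for every H ∈ F_≤(P) and every pair e of nonadjacent vertices of H, there is some G ∈ F_≤(P) such that G is an induced subgraph of H+e (the graph obtained from H by adding the edge e). In this case, P = {F : no graph G ∈ F_≤(P) is isomorphic to a subgraph of F}. -/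
attribute [local instance] Classical.propDecidable

open SimpleGraph

/-- `F_≤(P)`: minimal forbidden induced subgraphs of `P`, i.e. graphs `H ∉ P`
all of whose proper induced subgraphs are in `P`. -/
def ForbInd (P : GProp) : GProp := fun H =>
  Nonempty H.V ∧ ¬ P H ∧
    ∀ K : FGraph, Nonempty K.V → K.IsInduced H → ¬ H.IsInduced K → P K

/-!
A minimal forbidden induced subgraph sits inside every graph outside `P`. If `P` is hereditary,
`H + e` lies outside `P` together with `H`, which gives the condition on `F_≤(P)`. Conversely,
under the condition, deleting one edge cannot leave `P`: a member `G` of `F_≤(P)` induced in `K`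
either misses an end of the deleted edge, and is then induced in `K + e` as well, or it contains
both ends, and then `F_≤(P)` has a member induced in `G + e`, hence in `K + e`. Deleting the
missing edges one at a time, any subgraph of a graph in `P` is in `P`.
-/

namespace SimpleGraph.Embedding

variable {V W : Type*} {G : SimpleGraph V} {H : SimpleGraph W}

def supEdge (e : G ↪g H) (a b : V) : G ⊔ edge a b ↪g H ⊔ edge (e a) (e b) where
  toEmbedding := e.toEmbedding
  map_rel_iff' {x y} := by
    change (H ⊔ edge (e a) (e b)).Adj (e x) (e y) ↔ _
    simp only [sup_adj, edge_adj, e.map_adj_iff, ne_eq, e.injective.eq_iff]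

def toSupEdge (e : G ↪g H) {a b : W} (hab : ¬ (a ∈ Set.range e ∧ b ∈ Set.range e)) :
    G ↪g H ⊔ edge a b where
  toEmbedding := e.toEmbedding
  map_rel_iff' {x y} := by
    change (H ⊔ edge a b).Adj (e x) (e y) ↔ _
    simp only [sup_adj, edge_adj, e.map_adj_iff, or_iff_left_iff_imp]
    rintro ⟨⟨rfl, rfl⟩ | ⟨rfl, rfl⟩, -⟩
    · exact absurd ⟨⟨x, rfl⟩, ⟨y, rfl⟩⟩ hab
    · exact absurd ⟨⟨y, rfl⟩, ⟨x, rfl⟩⟩ hab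

end SimpleGraph.Embedding

namespace FGraph

lemma IsInduced.refl (G : FGraph) : G.IsInduced G := ⟨Embedding.refl⟩

lemma IsInduced.trans {G H K : FGraph} (hGH : G.IsInduced H) (hHK : H.IsInduced K) :
    G.IsInduced K :=
  ⟨hHK.some.comp hGH.some⟩

lemma IsInduced.isSub {G H : FGraph} (h : G.IsInduced H) : G.IsSub H :=
  ⟨h.some.toHom, h.some.injective⟩

lemma IsInduced.card_lt {G H : FGraph} (hGH : G.IsInduced H) (hHG : ¬ H.IsInduced G) :
    Fintype.card G.V < Fintype.card H.V := by
  obtain ⟨e⟩ := hGH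
  refine (Fintype.card_le_of_embedding e.toEmbedding).lt_of_ne fun hcard => hHG ?_
  have he : Function.Bijective e :=
    (Fintype.bijective_iff_injective_and_card e).mpr ⟨e.injective, hcard⟩
  let iso : G.graph ≃g H.graph := ⟨Equiv.ofBijective e he, e.map_adj_iff⟩
  exact ⟨iso.symm.toEmbedding⟩

lemma isSub_addEdge (H : FGraph) (a b : H.V) : H.IsSub (addEdge H a b) :=
  ⟨⟨id, fun h => Or.inl h⟩, Function.injective_id⟩

end FGraph

open FGraph

variable {P : GProp}

def AddEdgeContainsForbInd (P : GProp) : Prop :=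
  ∀ H, ForbInd P H → ∀ a b : H.V, a ≠ b → ¬ H.graph.Adj a b →
    ∃ G, ForbInd P G ∧ G.IsInduced (addEdge H a b)

/-- A smallest induced subgraph of `F` outside `P` is a minimal forbidden one. -/
lemma exists_forbInd_isInduced {F : FGraph} (hne : Nonempty F.V) (hF : ¬ P F) :
    ∃ G, ForbInd P G ∧ G.IsInduced F := by
  let Bad : FGraph → Prop := fun K => Nonempty K.V ∧ K.IsInduced F ∧ ¬ P K
  have hBad : ∃ n, ∃ K, Bad K ∧ Fintype.card K.V = n := ⟨_, F, ⟨hne, .refl F, hF⟩, rfl⟩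
  obtain ⟨G, ⟨hGne, hGF, hGP⟩, hGcard⟩ := Nat.find_spec hBad
  refine ⟨G, ⟨hGne, hGP, fun K hKne hKG hGK => ?_⟩, hGF⟩
  by_contra hKP
  have hmin := Nat.find_min' hBad ⟨K, ⟨hKne, hKG.trans hGF, hKP⟩, rfl⟩
  have hlt := hKG.card_lt hGK
  omega

lemma addEdgeContainsForbInd_of_hereditary (hher : Hereditary P) : AddEdgeContainsForbInd P := by
  intro H hH a b _ _
  have hnot : ¬ P (addEdge H a b) := fun hP => hH.2.1 (hher _ H hP (isSub_addEdge H a b) hH.1)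
  exact exists_forbInd_isInduced hH.1 hnot

lemma mem_of_addEdge_mem (hind : IndHereditary P) (hC : AddEdgeContainsForbInd P)
    {K : FGraph} {a b : K.V} (hab : a ≠ b) (hnadj : ¬ K.graph.Adj a b)
    (hK : P (addEdge K a b)) : P K := by
  by_contra hKP
  obtain ⟨G, hG, ⟨e⟩⟩ := exists_forbInd_isInduced ⟨a⟩ hKP
  by_cases hrange : a ∈ Set.range e ∧ b ∈ Set.range e
  · obtain ⟨⟨a', rfl⟩, ⟨b', rfl⟩⟩ := hrange
    obtain ⟨G', hG', hG'G⟩ :=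
      hC G hG a' b' (fun h => hab (congrArg e h)) (fun h => hnadj (e.map_adj_iff.mpr h))
    exact hG'.2.1 (hind _ G' hK (hG'G.trans ⟨e.supEdge a' b'⟩) hG'.1)
  · exact hG.2.1 (hind _ G hK ⟨e.toSupEdge hrange⟩ hG.1)

lemma mem_mk_of_le (hind : IndHereditary P) (hC : AddEdgeContainsForbInd P)
    {V : Type} [Fintype V] {K G : SimpleGraph V} (hKG : K ≤ G) (hG : P ⟨V, G⟩) : P ⟨V, K⟩ := by
  induction K using WellFoundedGT.induction with
  | _ K ih =>
  obtain rfl | hlt := hKG.eq_or_lt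
  · exact hG
  obtain ⟨a, b, hGab, hKab⟩ : ∃ a b, G.Adj a b ∧ ¬ K.Adj a b := by
    by_contra! h
    exact hlt.not_ge fun a b => h a b
  have hab : a ≠ b := G.ne_of_adj hGab
  refine mem_of_addEdge_mem hind hC (K := ⟨V, K⟩) hab hKab (ih _ (K.lt_sup_edge a b hab hKab) ?_)
  exact sup_le hKG ((edge_le_iff G).mpr (.inr hGab))

lemma hereditary_of_addEdgeContainsForbInd (hind : IndHereditary P)
    (hC : AddEdgeContainsForbInd P) : Hereditary P := by
  rintro F K hF ⟨f, hf⟩ hne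
  have hcomap : P ⟨K.V, F.graph.comap f⟩ :=
    hind F _ hF ⟨Embedding.comap ⟨f, hf⟩ F.graph⟩ hne
  exact mem_mk_of_le hind hC (fun _ _ h => f.map_adj h) hcomap

lemma mem_iff_forall_forbInd_not_isSub (hP : IsGProp P) (hher : Hereditary P) (F : FGraph) :
    P F ↔ Nonempty F.V ∧ ∀ G, ForbInd P G → ¬ G.IsSub F := by
  refine ⟨fun hF => ⟨hP.vertexNonempty F hF, fun G hG hGF => hG.2.1 (hher F G hF hGF hG.1)⟩, ?_⟩
  rintro ⟨hne, hforb⟩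
  by_contra hF
  obtain ⟨G, hG, hGF⟩ := exists_forbInd_isInduced hne hF
  exact hforb G hG hGF.isSub

/-- an induced-hereditary graph property `P` is hereditary iff
for every `H ∈ F_≤(P)` and every pair `a ≠ b` of nonadjacent vertices of `H`,
some `G ∈ F_≤(P)` is an induced subgraph of `H + ab`; in this case `P` is
exactly the class of graphs (on ≥ 1 vertex) having no subgraph in `F_≤(P)`. -/
theorem statement_19 (P : GProp) (hP : IsGProp P) (hind : IndHereditary P) :
    (Hereditary P ↔
      ∀ H, ForbInd P H → ∀ a b : H.V, a ≠ b → ¬ H.graph.Adj a b →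
        ∃ G, ForbInd P G ∧ G.IsInduced (addEdge H a b)) ∧
    ((∀ H, ForbInd P H → ∀ a b : H.V, a ≠ b → ¬ H.graph.Adj a b →
        ∃ G, ForbInd P G ∧ G.IsInduced (addEdge H a b)) →
      ∀ F : FGraph, P F ↔ (Nonempty F.V ∧ ∀ G, ForbInd P G → ¬ G.IsSub F)) :=
  ⟨⟨addEdgeContainsForbInd_of_hereditary, hereditary_of_addEdgeContainsForbInd hind⟩,
    fun hC => mem_iff_forall_forbInd_not_isSub hP (hereditary_of_addEdgeContainsForbInd hind hC)⟩
end
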